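/- arXiv:1610.07440 — 4 statements merged into one kernel-verified Lean document; each statement's English description precedes it below -/
import Mathlib

section
/- Let f ∈ ℤ[T] be a nonzero primitive squarefree polynomial in one variable. Then there exists a constant C = C(f) > 0, depending only on f, such that for every prime number p and every real number X ≥ 1, the number of integers n with |n| ≤ X and p² ∣ f(n) is at most C·(X/p² + 1). -/
/-!
Since `f` is squarefree it is separable over `ℚ`, so the resultant `D` of `f` and `f'` is a
nonzero integer with `a f + b f' = D` for some `a b ∈ ℤ[T]`. For `p ∤ D`, `f'` is a unit at every
root of `f` modulo `p²`, so by Taylor expansion two roots that agree modulo `p` coincide: `f` has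
at most `deg f` roots modulo `p²`. For the finitely many `p ∣ D` there are trivially at most
`p² ≤ D²` roots. Finally, `[-X, X]` meets each residue class modulo `p²` in at most
`2 (X / p² + 1)` integers.
-/

open Polynomial

namespace Polynomial

theorem Squarefree.map_fraction_map {R K : Type*} [CommRing R] [IsDomain R]
    [NormalizedGCDMonoid R] [Field K] [Algebra R K] [IsFractionRing R K] {f : R[X]}
    (hf : Squarefree f) :
    Squarefree (f.map (algebraMap R K)) := by
  intro g hg
  have hg0 : g ≠ 0 := by
    rintro rfl
    rw [mul_zero, zero_dvd_iff,
      Polynomial.map_eq_zero_iff (IsFractionRing.injective R K)] at hg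
    exact not_squarefree_zero (hg ▸ hf)
  set g' := IsLocalization.integerNormalization (nonZeroDivisors R) g
  obtain ⟨c, hc, hg'⟩ := IsLocalization.integerNormalization_spec (nonZeroDivisors R) g
  have hprim_dvd : g'.primPart.map (algebraMap R K) ∣ g := by
    have hunit : IsUnit (C (algebraMap R K c)) :=
      isUnit_C.mpr (isUnit_iff_ne_zero.mpr
        (IsFractionRing.to_map_ne_zero_of_mem_nonZeroDivisors hc))
    rw [← hunit.dvd_mul_left, ← smul_eq_C_mul, algebraMap_smul, ← hg']
    exact Polynomial.map_dvd _ g'.primPart_dvd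
  refine isUnit_or_eq_zero_of_isUnit_integerNormalization_primPart hg0 (hf _ ?_)
  refine (g'.isPrimitive_primPart.mul g'.isPrimitive_primPart)
    |>.dvd_of_fraction_map_dvd_fraction_map (K := K) ?_
  rw [Polynomial.map_mul]
  exact (mul_dvd_mul hprim_dvd hprim_dvd).trans hg

theorem exists_mul_add_derivative_mul_eq_C_of_separable_map {R K : Type*} [CommRing R]
    [IsDomain R] [Field K] {φ : R →+* K} (hφ : Function.Injective φ) {f : R[X]}
    (hf : (f.map φ).Separable) :
    ∃ (a b : R[X]) (D : R), D ≠ 0 ∧ f * a + derivative f * b = C D := by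
  by_cases hdeg : f.natDegree = 0
  · rw [eq_C_of_natDegree_eq_zero hdeg] at hf ⊢
    refine ⟨1, 0, f.coeff 0, fun h0 => ?_, by simp⟩
    rw [h0, C_0, Polynomial.map_zero] at hf
    exact not_separable_zero hf
  obtain ⟨a, b, -, -, hab⟩ :=
    exists_mul_add_mul_eq_C_resultant f (derivative f) le_rfl le_rfl (Or.inl hdeg)
  refine ⟨a, b, _, fun h0 => resultant_ne_zero _ _ hf ?_, hab⟩
  rw [derivative_map, resultant_map_map, natDegree_map_eq_of_injective hφ,
    natDegree_map_eq_of_injective hφ, h0, map_zero]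

theorem eq_of_isRoot_of_sub_sq_eq_zero {R : Type*} [CommRing R] {f : R[X]} {x y : R}
    (hx : f.IsRoot x) (hy : f.IsRoot y) (hxy : (y - x) ^ 2 = 0)
    (hd : IsUnit ((derivative f).eval x)) : x = y := by
  obtain ⟨k, hk⟩ := f.binomExpansion x (y - x)
  rw [add_sub_cancel, hy.eq_zero, hx.eq_zero, hxy, mul_zero, add_zero, zero_add, eq_comm,
    hd.mul_right_eq_zero, sub_eq_zero] at hk
  exact hk.symm

end Polynomial

namespace ZMod

theorem sub_sq_eq_zero_of_castHom_eq {p : ℕ} [NeZero p] {x y : ZMod (p ^ 2)}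
    (h : castHom (dvd_pow_self p two_ne_zero) (ZMod p) x =
      castHom (dvd_pow_self p two_ne_zero) (ZMod p) y) :
    (y - x) ^ 2 = 0 := by
  obtain ⟨k, hk⟩ : p ∣ (y - x).val := by
    rw [← natCast_eq_zero_iff, ← map_natCast (castHom (dvd_pow_self p two_ne_zero) (ZMod p)),
      natCast_zmod_val, map_sub, h, sub_self]
  rw [← natCast_zmod_val (y - x), hk, Nat.cast_mul, mul_pow, ← Nat.cast_pow, natCast_self,
    zero_mul]

theorem isUnit_intCast_of_not_dvd {p : ℕ} (hp : p.Prime) {D : ℤ} (hD : ¬ (p : ℤ) ∣ D) :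
    IsUnit (D : ZMod (p ^ 2)) := by
  rw [Int.natCast_dvd] at hD
  rcases Int.natAbs_eq D with hD' | hD'
  · rw [hD', Int.cast_natCast]
    exact (isUnit_natCast_iff_not_dvd_pow hp two_pos).mpr hD
  · rw [hD', Int.cast_neg, Int.cast_natCast]
    exact ((isUnit_natCast_iff_not_dvd_pow hp two_pos).mpr hD).neg

end ZMod

open Finset

theorem Int.card_Ioc_floor_floor_le {a b : ℝ} (hab : a ≤ b) :
    (#(Ioc ⌊a⌋ ⌊b⌋) : ℝ) ≤ b - a + 1 := by
  rw [Int.card_Ioc, ← Int.cast_natCast, Int.toNat_eq_max, Int.cast_max, Int.cast_sub,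
    Int.cast_zero]
  exact max_le (by linarith [Int.floor_le b, Int.lt_floor_add_one a]) (by linarith)

theorem ZMod.card_abs_le_intCast_mem_le (m : ℕ) [NeZero m] (T : Finset (ZMod m)) {X : ℝ}
    (hX : 0 ≤ X) :
    (Nat.card {n : ℤ | |(n : ℝ)| ≤ X ∧ (n : ZMod m) ∈ T} : ℝ) ≤ #T * (2 * (X / m + 1)) := by
  have hm : (0 : ℝ) < m := by exact_mod_cast Nat.pos_of_neZero m
  -- `n` is determined by its residue mod `m` and its quotient `n / m`, which lies in `I`.
  set I := Ioc ⌊-(X / m) - 1⌋ ⌊X / m⌋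
  have hmaps : ∀ n ∈ {n : ℤ | |(n : ℝ)| ≤ X ∧ (n : ZMod m) ∈ T},
      ((n : ZMod m), n / (m : ℤ)) ∈ T ×ˢ I := by
    rintro n ⟨hn, hnT⟩
    have hlo : ((n / m : ℤ) : ℝ) * m ≤ n := by
      exact_mod_cast Int.ediv_mul_le n (Int.natCast_ne_zero.mpr (NeZero.ne m))
    have hhi : (n : ℝ) < ((n / m : ℤ) + 1 : ℝ) * m := by
      exact_mod_cast Int.lt_ediv_add_one_mul_self n (Int.natCast_pos.mpr (Nat.pos_of_neZero m))
    obtain ⟨hn₁, hn₂⟩ := abs_le.mp hn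
    refine mem_product.mpr ⟨hnT, mem_Ioc.mpr ⟨Int.floor_lt.mpr ?_, Int.le_floor.mpr ?_⟩⟩
    · rw [show -(X / m) - 1 = (-X - m) / m by field_simp, div_lt_iff₀ hm]
      linarith
    · rw [le_div_iff₀ hm]; linarith
  have hinj : Set.InjOn (fun n : ℤ => ((n : ZMod m), n / (m : ℤ)))
      {n : ℤ | |(n : ℝ)| ≤ X ∧ (n : ZMod m) ∈ T} := by
    intro n₁ _ n₂ _ h
    obtain ⟨hmod, hdiv⟩ := Prod.mk.inj h
    rw [ZMod.intCast_eq_intCast_iff'] at hmod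
    rw [← Int.mul_ediv_add_emod n₁ m, hmod, hdiv, Int.mul_ediv_add_emod]
  calc (Nat.card {n : ℤ | |(n : ℝ)| ≤ X ∧ (n : ZMod m) ∈ T} : ℝ)
      ≤ #(T ×ˢ I) := by
        rw [Nat.card_coe_set_eq, ← Set.ncard_coe_finset]
        exact_mod_cast Set.ncard_le_ncard_of_injOn _ hmaps hinj (Finset.finite_toSet _)
    _ = #T * #I := by rw [card_product, Nat.cast_mul]
    _ ≤ #T * (2 * (X / m + 1)) := by
        gcongr
        have hXm : 0 ≤ X / m := by positivity
        exact (Int.card_Ioc_floor_floor_le (by linarith)).trans_eq (by ring)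

namespace Polynomial

theorem card_isRoot_zmod_sq_le_natDegree {p : ℕ} [Fact p.Prime] {f a b : ℤ[X]} {D : ℤ}
    (hD : f * a + derivative f * b = C D) (hpD : ¬ (p : ℤ) ∣ D) :
    #{x : ZMod (p ^ 2) | (f.map (Int.castRingHom (ZMod (p ^ 2)))).IsRoot x} ≤ f.natDegree := by
  set ψ := ZMod.castHom (dvd_pow_self p two_ne_zero) (ZMod p)
  set fp := f.map (Int.castRingHom (ZMod (p ^ 2)))
  have hfD : fp * a.map (Int.castRingHom _) + derivative fp * b.map (Int.castRingHom _) =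
      C (D : ZMod (p ^ 2)) := by
    have := congrArg (map (Int.castRingHom (ZMod (p ^ 2)))) hD
    rwa [Polynomial.map_add, Polynomial.map_mul, Polynomial.map_mul, Polynomial.map_C,
      ← derivative_map] at this
  have hDunit := ZMod.isUnit_intCast_of_not_dvd Fact.out hpD
  have hderiv : ∀ x, fp.IsRoot x → IsUnit ((derivative fp).eval x) := by
    intro x hx
    have := congrArg (eval x) hfD
    rw [eval_add, eval_mul, eval_mul, hx.eq_zero, zero_mul, zero_add, eval_C] at this
    exact isUnit_of_mul_isUnit_left (this ▸ hDunit)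
  have hfψ : fp.map ψ ≠ 0 := by
    intro h0
    have := congrArg (map ψ) hfD
    rw [Polynomial.map_add, Polynomial.map_mul, Polynomial.map_mul, ← derivative_map, h0,
      derivative_zero, zero_mul, zero_mul, add_zero, Polynomial.map_C, eq_comm, C_eq_zero] at this
    exact (hDunit.map ψ).ne_zero this
  calc #{x : ZMod (p ^ 2) | fp.IsRoot x}
      ≤ #(fp.map ψ).roots.toFinset := by
        refine card_le_card_of_injOn ψ (fun x hx => ?_) (fun x hx y hy hxy => ?_)
        · rw [mem_coe, Multiset.mem_toFinset, mem_roots hfψ]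
          exact (mem_filter.mp hx).2.map
        · exact eq_of_isRoot_of_sub_sq_eq_zero (mem_filter.mp hx).2 (mem_filter.mp hy).2
            (ZMod.sub_sq_eq_zero_of_castHom_eq hxy) (hderiv x (mem_filter.mp hx).2)
    _ ≤ Multiset.card (fp.map ψ).roots := Multiset.toFinset_card_le _
    _ ≤ f.natDegree := (card_roots' _).trans (natDegree_map_le.trans natDegree_map_le)

theorem card_isRoot_zmod_sq_le {p : ℕ} [Fact p.Prime] {f a b : ℤ[X]} {D : ℤ}
    (hD0 : D ≠ 0) (hD : f * a + derivative f * b = C D) :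
    #{x : ZMod (p ^ 2) | (f.map (Int.castRingHom (ZMod (p ^ 2)))).IsRoot x} ≤
      D.natAbs ^ 2 + f.natDegree := by
  by_cases hpD : (p : ℤ) ∣ D
  · calc #{x : ZMod (p ^ 2) | (f.map (Int.castRingHom (ZMod (p ^ 2)))).IsRoot x}
        ≤ p ^ 2 := (card_filter_le _ _).trans (ZMod.card (p ^ 2)).le
      _ ≤ D.natAbs ^ 2 :=
        Nat.pow_le_pow_left (Nat.le_of_dvd (Int.natAbs_pos.mpr hD0) (Int.natCast_dvd.mp hpD)) 2
      _ ≤ D.natAbs ^ 2 + f.natDegree := Nat.le_add_right _ _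
  · exact (card_isRoot_zmod_sq_le_natDegree hD hpD).trans (Nat.le_add_left _ _)

end Polynomial

theorem statement_0_general (f : Polynomial ℤ) (hsf : Squarefree f) :
    ∃ C : ℝ, 0 < C ∧ ∀ p : ℕ, p.Prime → ∀ X : ℝ, 1 ≤ X →
      (Nat.card {n : ℤ | |(n : ℝ)| ≤ X ∧ ((p : ℤ)) ^ 2 ∣ f.eval n} : ℝ)
        ≤ C * (X / (p : ℝ) ^ 2 + 1) := by
  obtain ⟨a, b, D, hD0, hD⟩ :=
    exists_mul_add_derivative_mul_eq_C_of_separable_map (algebraMap ℤ ℚ).injective_int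
      (PerfectField.separable_iff_squarefree.mpr hsf.map_fraction_map)
  have hK : 0 < D.natAbs ^ 2 + f.natDegree :=
    Nat.add_pos_left (pow_pos (Int.natAbs_pos.mpr hD0) 2) _
  refine ⟨2 * (D.natAbs ^ 2 + f.natDegree : ℕ), mul_pos two_pos (Nat.cast_pos.mpr hK),
    fun p hp X hX => ?_⟩
  have : Fact p.Prime := ⟨hp⟩
  set T : Finset (ZMod (p ^ 2)) := {x | (f.map (Int.castRingHom (ZMod (p ^ 2)))).IsRoot x}
  have hT : ∀ n : ℤ, (p : ℤ) ^ 2 ∣ f.eval n ↔ (n : ZMod (p ^ 2)) ∈ T := fun n => by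
    rw [mem_filter_univ, IsRoot.def, eval_intCast_map, eq_intCast,
      ZMod.intCast_zmod_eq_zero_iff_dvd, Nat.cast_pow, Int.cast_id]
  simp_rw [hT]
  calc _ ≤ #T * (2 * (X / (p ^ 2 : ℕ) + 1)) :=
        ZMod.card_abs_le_intCast_mem_le (p ^ 2) T (by linarith)
    _ ≤ ((D.natAbs ^ 2 + f.natDegree : ℕ) : ℝ) * (2 * (X / (p ^ 2 : ℕ) + 1)) := by
        gcongr
        exact card_isRoot_zmod_sq_le hD0 hD
    _ = _ := by push_cast; ring

/-- Let `f ∈ ℤ[T]` be a nonzero primitive squarefree polynomial. Then there is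
a constant `C = C(f) > 0`, depending only on `f`, such that for every prime `p` and every real
`X ≥ 1`, the number of integers `n` with `|n| ≤ X` and `p² ∣ f(n)` is at most `C·(X/p² + 1)`. -/
theorem statement_0 (f : Polynomial ℤ) (hf0 : f ≠ 0) (hprim : f.IsPrimitive)
    (hsf : Squarefree f) :
    ∃ C : ℝ, 0 < C ∧ ∀ p : ℕ, p.Prime → ∀ X : ℝ, 1 ≤ X →
      (Nat.card {n : ℤ | |(n : ℝ)| ≤ X ∧ ((p : ℤ)) ^ 2 ∣ f.eval n} : ℝ)
        ≤ C * (X / (p : ℝ) ^ 2 + 1) :=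
  statement_0_general f hsf
end

section
/- Let Q, P ∈ ℤ[T] be polynomials with Q nonconstant, such that the resultant Res(P,Q) is nonzero and the discriminant of Q is nonzero, and let S₀ be a finite set of prime numbers. Then there exist a prime number p₀ ∉ S₀ and a positive integer n such that p₀² divides Q(n) and P(n)·Q(n)/p₀² ≡ 1 (mod p₀). In particular p₀² exactly divides Q(n) and p₀ does not divide P(n). -/
open Polynomial

/-- The Sylvester matrix of the coefficient sequences `a` (of formal degree `m`) and `b`
(of formal degree `n`): the first `n` rows are the shifts of the coefficients of `a`, the
last `m` rows are the shifts of the coefficients of `b`. Its determinant is the resultant. -/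
def sylvester (m n : ℕ) (a b : ℕ → ℤ) : Matrix (Fin (n + m)) (Fin (n + m)) ℤ :=
  fun i j =>
    if (i : ℕ) < n then
      (if (i : ℕ) ≤ (j : ℕ) ∧ (j : ℕ) ≤ (i : ℕ) + m then a (m + (i : ℕ) - (j : ℕ)) else 0)
    else
      (if (i : ℕ) - n ≤ (j : ℕ) ∧ (j : ℕ) ≤ (i : ℕ) then b ((i : ℕ) - (j : ℕ)) else 0)

/-- The resultant `Res(P, Q)` of two integer polynomials, as the determinant of their
Sylvester matrix. -/
def resZ (P Q : Polynomial ℤ) : ℤ :=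
  (sylvester P.natDegree Q.natDegree P.coeff Q.coeff).det

/-!
Choose a prime `p ∉ S₀`, dividing neither `Res(P, Q)` nor `Res(Q, Q')`, such that `p ∣ Q(y)` for
some `y` (Schur: if `c = Q(0) ≠ 0` and `π` is the product of the excluded primes, then
`Q(cπx) = c (1 + πxK)` and `1 + πxK` is prime to `π`). A resultant is a combination of its two
arguments with polynomial coefficients, so `p ∤ P(y)` and `p ∤ Q'(y)`. As `Q'(y)` is a unit
mod `p`, two Hensel steps move `y` to `x ≡ y (mod p)` with `Q(x) ≡ p² c (mod p³)` for an inverse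
`c` of `P(y)` mod `p`, and a shift by a multiple of `p³` makes `x` positive.
-/

-- `sylvester` lists coefficients in decreasing order: reversing rows and columns gives Mathlib's.
theorem sylvester_eq_transpose_submatrix (f g : ℤ[X]) (m n : ℕ) :
    sylvester m n f.coeff g.coeff =
      Matrix.transpose ((Polynomial.sylvester f g m n).submatrix
        ((finCongr (add_comm n m)).trans Fin.revPerm)
        ((finCongr (add_comm n m)).trans Fin.revPerm)) := by
  ext i j
  simp only [Matrix.transpose_apply, Matrix.submatrix_apply, Equiv.trans_apply, finCongr_apply,
    Fin.revPerm_apply, Polynomial.sylvester, Matrix.of_apply, _root_.sylvester]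
  have hi := i.isLt
  have hj := j.isLt
  induction h : Fin.rev (Fin.cast (add_comm n m) i) using Fin.addCases <;>
  · have hk := congrArg Fin.val h
    simp only [Fin.val_rev, Fin.val_cast, Fin.val_castAdd, Fin.val_natAdd, Fin.addCases_left,
      Fin.addCases_right, Set.mem_Icc] at hk ⊢
    split_ifs <;> first | omega | (congr 1; omega)

theorem resZ_eq_resultant (f g : ℤ[X]) : resZ f g = f.resultant g := by
  rw [resZ, sylvester_eq_transpose_submatrix, Matrix.det_transpose,
    Matrix.det_submatrix_equiv_self, Polynomial.resultant]

namespace Int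

theorem exists_prime_dvd_notMem {z : ℤ} (hz : z.natAbs ≠ 1) {B : Finset ℕ}
    (hzB : ∏ q ∈ B.erase 0, (q : ℤ) ∣ z - 1) : ∃ p : ℕ, p.Prime ∧ p ∉ B ∧ (p : ℤ) ∣ z := by
  obtain ⟨p, hp, hpz⟩ := Nat.exists_prime_and_dvd hz
  refine ⟨p, hp, fun hpB => hp.not_dvd_one ?_, natCast_dvd.2 hpz⟩
  have hpB' : (p : ℤ) ∣ z - 1 :=
    (Finset.dvd_prod_of_mem _ (Finset.mem_erase.2 ⟨hp.ne_zero, hpB⟩)).trans hzB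
  exact_mod_cast sub_sub_cancel z 1 ▸ (natCast_dvd.2 hpz).sub hpB'

theorem exists_pos_natCast_modEq (x : ℤ) {m : ℤ} (hm : m ≠ 0) :
    ∃ n : ℕ, 0 < n ∧ (n : ℤ) ≡ x [ZMOD m] := by
  have hpos : 0 < x % m + |m| := add_pos_of_nonneg_of_pos (emod_nonneg x hm) (abs_pos.2 hm)
  refine ⟨(x % m + |m|).toNat, by omega, ?_⟩
  rw [Int.toNat_of_nonneg hpos.le]
  simpa using (mod_modEq x m).add (modEq_zero_iff_dvd.2 (self_dvd_abs m))

theorem pow_two_dvd_and_ediv_modEq_one {p a b c : ℤ} (hp : p ≠ 0) (hpu : ¬IsUnit p)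
    (ha : p ^ 3 ∣ a - p ^ 2 * c) (hbc : p ∣ b * c - 1) :
    p ^ 2 ∣ a ∧ b * a / p ^ 2 ≡ 1 [ZMOD p] ∧ ¬p ^ 3 ∣ a ∧ ¬p ∣ b := by
  obtain ⟨s, hs⟩ := ha
  obtain ⟨t, ht⟩ := hbc
  have ha : a = p ^ 2 * (c + p * s) := by linear_combination hs
  have hbcs : p ∣ b * (c + p * s) - 1 := ⟨t + b * s, by linear_combination ht⟩
  have hbcs' : ¬p ∣ b * (c + p * s) := fun h =>
    hpu (isUnit_of_dvd_one (by simpa using dvd_sub h hbcs))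
  refine ⟨⟨_, ha⟩, ?_, ?_, fun hb => hbcs' (hb.mul_right _)⟩
  · rw [ha, mul_left_comm, mul_ediv_cancel_left _ (pow_ne_zero 2 hp)]
    exact (modEq_iff_dvd.2 hbcs).symm
  · rw [ha, pow_succ]
    exact fun h => hbcs' (((mul_dvd_mul_iff_left (pow_ne_zero 2 hp)).1 h).mul_left b)

end Int

namespace Polynomial

section CommRing

variable {R : Type*} [CommRing R]

theorem dvd_resultant_of_dvd_eval {f g : R[X]} (hfg : f.natDegree ≠ 0 ∨ g.natDegree ≠ 0)
    {p x : R} (hf : p ∣ f.eval x) (hg : p ∣ g.eval x) : p ∣ f.resultant g := by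
  obtain ⟨a, b, -, -, hab⟩ := exists_mul_add_mul_eq_C_resultant f g le_rfl le_rfl hfg
  have hx := congrArg (eval x) hab
  simp only [eval_add, eval_mul, eval_C] at hx
  exact hx ▸ dvd_add (dvd_mul_of_dvd_left hf _) (dvd_mul_of_dvd_left hg _)

theorem isCoprime_eval_of_dvd_sub {f : R[X]} {p x y : R} (h : IsCoprime p (f.eval x))
    (hxy : p ∣ y - x) : IsCoprime p (f.eval y) := by
  obtain ⟨z, hz⟩ := hxy.trans (sub_dvd_eval_sub y x f)
  rw [sub_eq_iff_eq_add'.1 hz]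
  exact h.add_mul_left_right z

theorem exists_pow_succ_dvd_eval_add_pow_mul_sub {f : R[X]} {p x : R} {k : ℕ} (hk : k ≠ 0)
    (hfx : p ^ k ∣ f.eval x) (hf'x : IsCoprime p (f.derivative.eval x)) (c : R) :
    ∃ t, p ^ (k + 1) ∣ f.eval (x + p ^ k * t) - p ^ k * c := by
  obtain ⟨j, rfl⟩ : ∃ j, k = j + 1 := ⟨k - 1, by omega⟩
  obtain ⟨d, hd⟩ := hfx
  obtain ⟨u, v, huv⟩ := hf'x
  obtain ⟨K, hK⟩ := f.binomExpansion x (p ^ (j + 1) * ((c - d) * v))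
  -- Newton's step `t = (c - d) / f'(x)`, with `v` an inverse of `f'(x)` mod `p`.
  refine ⟨(c - d) * v, (d - c) * u + p ^ j * K * ((c - d) * v) ^ 2, ?_⟩
  rw [hK, hd]
  linear_combination (p ^ (j + 1) * (c - d)) * huv

theorem exists_dvd_sub_and_pow_three_dvd_eval_sub {f : R[X]} {p y : R} (hfy : p ∣ f.eval y)
    (hf'y : IsCoprime p (f.derivative.eval y)) (c : R) :
    ∃ x, p ∣ x - y ∧ p ^ 3 ∣ f.eval x - p ^ 2 * c := by
  obtain ⟨t₁, ht₁⟩ :=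
    exists_pow_succ_dvd_eval_add_pow_mul_sub one_ne_zero (by rwa [pow_one]) hf'y 0
  have hx₁ : p ∣ (y + p ^ 1 * t₁) - y := ⟨t₁, by ring⟩
  obtain ⟨t₂, ht₂⟩ := exists_pow_succ_dvd_eval_add_pow_mul_sub two_ne_zero
    (by simpa using ht₁) (isCoprime_eval_of_dvd_sub hf'y hx₁) c
  exact ⟨_, ⟨t₁ + p * t₂, by ring⟩, ht₂⟩

theorem exists_eval_ne_and_ne_neg [IsDomain R] [Infinite R] {f : R[X]} (hf : f.natDegree ≠ 0)
    (a : R) : ∃ x, f.eval x ≠ a ∧ f.eval x ≠ -a := by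
  by_contra! h
  have hf' : (f - C a) * (f + C a) = 0 := Polynomial.funext fun x => by
    by_cases hx : f.eval x = a
    · simp [hx]
    · simp [h x hx]
  rcases mul_eq_zero.1 hf' with hf' | hf'
  · rw [sub_eq_zero.1 hf', natDegree_C] at hf
    exact hf rfl
  · rw [eq_neg_of_add_eq_zero_left hf', natDegree_neg, natDegree_C] at hf
    exact hf rfl

end CommRing

theorem exists_prime_dvd_eval_notMem {f : ℤ[X]} (hf : f.natDegree ≠ 0)
    (B : Finset ℕ) : ∃ p : ℕ, ∃ y : ℤ, p.Prime ∧ p ∉ B ∧ (p : ℤ) ∣ f.eval y := by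
  by_cases hc : f.eval 0 = 0
  · obtain ⟨p, hBp, hp⟩ := Nat.exists_infinite_primes (B.sup id + 1)
    refine ⟨p, p, hp, fun hpB => ?_, by simpa [hc] using sub_dvd_eval_sub (p : ℤ) 0 f⟩
    have : p ≤ B.sup id := Finset.le_sup (f := id) hpB
    omega
  set π : ℤ := ∏ q ∈ B.erase 0, (q : ℤ)
  have hπ : π ≠ 0 := Finset.prod_ne_zero_iff.2 fun q hq => by
    exact_mod_cast Finset.ne_of_mem_erase hq
  obtain ⟨x, hx⟩ := exists_eval_ne_and_ne_neg (f := f.comp (C (f.eval 0 * π) * X))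
    (by rwa [natDegree_comp, natDegree_C_mul_X _ (mul_ne_zero hc hπ), mul_one]) (f.eval 0)
  simp only [eval_comp, eval_mul, eval_C, eval_X] at hx
  obtain ⟨K, hK⟩ := sub_dvd_eval_sub (f.eval 0 * π * x) 0 f
  have hz : (1 + π * x * K).natAbs ≠ 1 := by
    intro h
    rcases Int.natAbs_eq_iff.1 h with h | h
    · exact hx.1 (by linear_combination hK + f.eval 0 * h)
    · exact hx.2 (by linear_combination hK + f.eval 0 * h)
  obtain ⟨p, hp, hpB, hpz⟩ := Int.exists_prime_dvd_notMem hz ⟨x * K, by ring⟩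
  exact ⟨p, f.eval 0 * π * x, hp, hpB, hpz.trans ⟨f.eval 0, by linear_combination hK⟩⟩

theorem exists_pos_nat_dvd_sub_and_pow_three_dvd_eval_sub {f : ℤ[X]} {p y : ℤ}
    (hp : p ≠ 0) (hfy : p ∣ f.eval y) (hf'y : IsCoprime p (f.derivative.eval y)) (c : ℤ) :
    ∃ n : ℕ, 0 < n ∧ p ∣ n - y ∧ p ^ 3 ∣ f.eval (n : ℤ) - p ^ 2 * c := by
  obtain ⟨x, hxy, hfx⟩ := exists_dvd_sub_and_pow_three_dvd_eval_sub hfy hf'y c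
  obtain ⟨n, hn, hnx⟩ := Int.exists_pos_natCast_modEq x (pow_ne_zero 3 hp)
  replace hnx := Int.modEq_iff_dvd.1 hnx.symm
  refine ⟨n, hn, ?_, ?_⟩
  · simpa using ((dvd_pow_self p three_ne_zero).trans hnx).add hxy
  · simpa using (hnx.trans (sub_dvd_eval_sub _ _ f)).add hfx

end Polynomial

/-- (Manduchi's lemma.) If `Q` is nonconstant, `Res(P,Q) ≠ 0` and
`disc(Q) ≠ 0` (the latter being equivalent to `Res(Q, Q') ≠ 0` for nonconstant `Q`), then
outside any prescribed finite set of primes there are a prime `p₀` and a positive integer `n`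
with `p₀² ∣ Q(n)` and `P(n)·Q(n)/p₀² ≡ 1 (mod p₀)`; in particular `p₀² ∥ Q(n)` and
`p₀ ∤ P(n)`. -/
theorem statement_7 (Q P : Polynomial ℤ) (hQ : Q.natDegree ≠ 0)
    (hres : resZ P Q ≠ 0)
    (hdisc : resZ Q (derivative Q) ≠ 0)
    (S₀ : Finset ℕ) :
    ∃ p₀ : ℕ, p₀.Prime ∧ p₀ ∉ S₀ ∧ ∃ n : ℕ, 0 < n ∧
      (p₀ : ℤ) ^ 2 ∣ Q.eval (n : ℤ) ∧
      (P.eval (n : ℤ) * Q.eval (n : ℤ)) / (p₀ : ℤ) ^ 2 ≡ 1 [ZMOD (p₀ : ℤ)] ∧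
      ¬ ((p₀ : ℤ) ^ 3 ∣ Q.eval (n : ℤ)) ∧ ¬ ((p₀ : ℤ) ∣ P.eval (n : ℤ)) := by
  obtain ⟨p, y, hp, hpS, hpQ⟩ := exists_prime_dvd_eval_notMem hQ
    (S₀ ∪ (resZ P Q * resZ Q (derivative Q)).natAbs.primeFactors)
  rw [Finset.mem_union, not_or] at hpS
  have hpZ : Prime (p : ℤ) := Nat.prime_iff_prime_int.1 hp
  have hpRes : ¬(p : ℤ) ∣ P.resultant Q * Q.resultant (derivative Q) := fun h =>
    hpS.2 (Nat.mem_primeFactors.2 ⟨hp, Int.natCast_dvd.1 (by rwa [resZ_eq_resultant,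
      resZ_eq_resultant]), by simp [hres, hdisc]⟩)
  rw [hpZ.dvd_mul, not_or] at hpRes
  have hPy : IsCoprime (p : ℤ) (P.eval y) := hpZ.coprime_iff_not_dvd.2 fun h =>
    hpRes.1 (dvd_resultant_of_dvd_eval (.inr hQ) h hpQ)
  have hQ'y : IsCoprime (p : ℤ) ((derivative Q).eval y) := hpZ.coprime_iff_not_dvd.2 fun h =>
    hpRes.2 (dvd_resultant_of_dvd_eval (.inl hQ) hpQ h)
  obtain ⟨u, c, huc⟩ := hPy
  obtain ⟨n, hn, hny, hQn⟩ :=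
    exists_pos_nat_dvd_sub_and_pow_three_dvd_eval_sub hpZ.ne_zero hpQ hQ'y c
  obtain ⟨w, hw⟩ := hny.trans (sub_dvd_eval_sub _ _ P)
  exact ⟨p, hp, hpS.1, n, hn, Int.pow_two_dvd_and_ediv_modEq_one hpZ.ne_zero hpZ.not_isUnit hQn
    ⟨w * c - u, by linear_combination c * hw + huc⟩⟩
end

section
/- Let δ be a nonzero even integer, and for a nonzero integer n and a prime p write n_{(p)} := n / p^{ν_p(n)} for the prime-to-p part of n. For nonzero integers a and α define H_δ(a, α) := ∏_{p prime, p ∤ δ, p² ∣ α} ( − (a_{(p)} | p) )^{ν_p(α) − 1}, where (· | p) is the Legendre symbol. Let a, a′, c, l, η be nonzero integers with l and η squarefree, gcd(c, l) = gcd(c, η) = 1, and set α := c²·l and β := c²·η. Suppose that for every prime p dividing c with p ∤ δ one has p ∤ a·a′ and a ≡ a′ (mod p). Then H_δ(a, α) = H_δ(a′, β). -/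
open scoped Classical

/-- The prime-to-`p` part `n_{(p)} = n / p^{ν_p(n)}` of an integer `n`. -/
def ptp (p : ℕ) (n : ℤ) : ℤ := n / (p : ℤ) ^ padicValInt p n

/-- The corrective factor
`H_δ(a, α) = ∏_{p ∤ δ, p² ∣ α} (−(a_{(p)} | p))^{ν_p(α) − 1}`,
the product running over primes `p` not dividing `δ` whose square divides `α`; since `δ` is
even, all such primes are odd and the Jacobi symbol `J(· | p)` is the Legendre symbol. -/
noncomputable def Hfun (δ a α : ℤ) : ℤ :=
  ∏ p ∈ α.natAbs.primeFactors.filter (fun p : ℕ => ¬ ((p : ℤ) ∣ δ) ∧ (p : ℤ) ^ 2 ∣ α),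
    (-(jacobiSym (ptp p a) p)) ^ (padicValInt p α - 1)

lemma isCoprime_of_prime_not_dvd {p : ℕ} (hp : p.Prime) {c : ℤ} (h : ¬ (p : ℤ) ∣ c) :
    IsCoprime (p : ℤ) c := by
  have h' : ¬ p ∣ c.natAbs := fun hd => h (Int.natCast_dvd.mpr hd)
  have := (Nat.Prime.coprime_iff_not_dvd hp).2 h'
  exact Int.isCoprime_iff_gcd_eq_one.mpr (by simpa [Int.gcd] using this)

lemma mem_filter_iff (δ c l : ℤ) (hc : c ≠ 0) (hl : l ≠ 0) (hlsf : Squarefree l)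
    (hcl : IsCoprime c l) (p : ℕ) :
    (p ∈ (c ^ 2 * l).natAbs.primeFactors.filter
      (fun p : ℕ => ¬ ((p : ℤ) ∣ δ) ∧ (p : ℤ) ^ 2 ∣ c ^ 2 * l)) ↔
      p.Prime ∧ (p : ℤ) ∣ c ∧ ¬ (p : ℤ) ∣ δ := by
  have hα : c ^ 2 * l ≠ 0 := mul_ne_zero (pow_ne_zero _ hc) hl
  simp only [Finset.mem_filter, Nat.mem_primeFactors, Int.natAbs_ne_zero]
  constructor
  · rintro ⟨⟨hp, hdvd, -⟩, hδ, hsq⟩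
    refine ⟨hp, ?_, hδ⟩
    by_contra hpc
    have hcop : IsCoprime ((p : ℤ) ^ 2) (c ^ 2) :=
      ((isCoprime_of_prime_not_dvd hp hpc).pow (m := 2) (n := 2))
    have : (p : ℤ) ^ 2 ∣ l := hcop.dvd_of_dvd_mul_left hsq
    rw [sq] at this
    exact hp.one_lt.ne' (by simpa using Int.isUnit_iff.1 (hlsf _ this))
  · rintro ⟨hp, hpc, hδ⟩
    have h2 : (p : ℤ) ^ 2 ∣ c ^ 2 * l := Dvd.dvd.mul_right (pow_dvd_pow_of_dvd hpc 2) l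
    refine ⟨⟨hp, ?_, hα⟩, hδ, h2⟩
    exact Int.natCast_dvd.mp (dvd_trans hpc ⟨c * l, by ring⟩)

lemma val_eq {p : ℕ} (hp : p.Prime) (c l : ℤ) (hc : c ≠ 0) (hl : l ≠ 0)
    (hpl : ¬ (p : ℤ) ∣ l) :
    padicValInt p (c ^ 2 * l) = padicValInt p (c ^ 2) := by
  haveI : Fact p.Prime := ⟨hp⟩
  rw [padicValInt.mul (pow_ne_zero _ hc) hl, padicValInt.eq_zero_of_not_dvd hpl, add_zero]

/-- With `α = c²·l` and `β = c²·η` (`l`, `η` squarefree and coprime to `c`),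
if for every prime `p ∣ c` with `p ∤ δ` one has `p ∤ a·a′` and `a ≡ a′ (mod p)`, then
`H_δ(a, α) = H_δ(a′, β)`. -/
theorem statement_12 (δ : ℤ) (hδ0 : δ ≠ 0) (hδeven : Even δ)
    (a a' c l η : ℤ) (ha : a ≠ 0) (ha' : a' ≠ 0) (hc : c ≠ 0) (hl : l ≠ 0) (hη : η ≠ 0)
    (hlsf : Squarefree l) (hηsf : Squarefree η)
    (hcl : IsCoprime c l) (hcη : IsCoprime c η)
    (hcong : ∀ p : ℕ, p.Prime → (p : ℤ) ∣ c → ¬ (p : ℤ) ∣ δ →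
      ¬ (p : ℤ) ∣ a * a' ∧ a ≡ a' [ZMOD (p : ℤ)]) :
    Hfun δ a (c ^ 2 * l) = Hfun δ a' (c ^ 2 * η) := by
  unfold Hfun
  apply Finset.prod_congr
  · ext p
    rw [mem_filter_iff δ c l hc hl hlsf hcl, mem_filter_iff δ c η hc hη hηsf hcη]
  · intro p hp
    rw [mem_filter_iff δ c η hc hη hηsf hcη] at hp
    obtain ⟨hpp, hpc, hpδ⟩ := hp
    obtain ⟨hpaa, hmod⟩ := hcong p hpp hpc hpδ
    have hpa : ¬ (p : ℤ) ∣ a := fun h => hpaa (h.mul_right a')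
    have hpa' : ¬ (p : ℤ) ∣ a' := fun h => hpaa (h.mul_left a)
    have hpl : ¬ (p : ℤ) ∣ l := fun h =>
      hpp.one_lt.ne' (by simpa using Int.isUnit_iff.1 (hcl.isUnit_of_dvd' hpc h))
    have hpη : ¬ (p : ℤ) ∣ η := fun h =>
      hpp.one_lt.ne' (by simpa using Int.isUnit_iff.1 (hcη.isUnit_of_dvd' hpc h))
    rw [val_eq hpp c l hc hl hpl, val_eq hpp c η hc hη hpη]
    have h1 : ptp p a = a := by
      simp [ptp, padicValInt.eq_zero_of_not_dvd hpa]
    have h2 : ptp p a' = a' := by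
      simp [ptp, padicValInt.eq_zero_of_not_dvd hpa']
    rw [h1, h2, jacobiSym.mod_left' hmod]
end

section
/- Let δ be a nonzero even integer, and for a nonzero integer n and a prime p write n_{(p)} := n / p^{ν_p(n)} for the prime-to-p part of n. For nonzero integers a and α define H_δ(a, α) := ∏_{p prime, p ∤ δ, p² ∣ α} ( − (a_{(p)} | p) )^{ν_p(α) − 1}, where (· | p) is the Legendre symbol. Let a, a′, c, l, η be nonzero integers with l and η squarefree, gcd(c, l) = gcd(c, η) = 1, and let q₀ be a prime with q₀ ∤ δ, q₀ ∤ c, q₀ ∤ l and q₀ ∤ η. Set α := c²·l and β := c²·q₀²·η. Suppose that for every prime p dividing c with p ∤ δ one has p ∤ a·a′ and a ≡ a′ (mod p), and suppose that (a′_{(q₀)} | q₀) = 1. Then H_δ(a, α) = − H_δ(a′, β). -/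
open scoped Classical

private lemma val_mul_sq (p : ℕ) (hp : p.Prime) (c x : ℤ) (hc : c ≠ 0) (hx : x ≠ 0)
    (hpx : ¬ (p : ℤ) ∣ x) : padicValInt p (c ^ 2 * x) = 2 * padicValInt p c := by
  haveI := Fact.mk hp
  rw [padicValInt.mul (pow_ne_zero 2 hc) hx, padicValInt.eq_zero_of_not_dvd hpx, sq,
    padicValInt.mul hc hc]
  ring

private lemma not_dvd_of_coprime {p : ℕ} (hp : p.Prime) {c l : ℤ} (h : IsCoprime c l)
    (hpc : (p : ℤ) ∣ c) : ¬ (p : ℤ) ∣ l := fun hpl =>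
  (Nat.prime_iff_prime_int.mp hp).not_unit (h.isUnit_of_dvd' hpc hpl)

private lemma sq_dvd_aux {p : ℕ} (hp : p.Prime) {c l : ℤ} (hsf : Squarefree l)
    (hdvd : (p : ℤ) ^ 2 ∣ c ^ 2 * l) (hpc : ¬ (p : ℤ) ∣ c) : False := by
  have hprime := Nat.prime_iff_prime_int.mp hp
  have hcop : IsCoprime ((p : ℤ) ^ 2) (c ^ 2) :=
    ((hprime.coprime_iff_not_dvd.mpr hpc).pow : IsCoprime ((p:ℤ)^2) (c^2))
  have hpl : (p : ℤ) ^ 2 ∣ l := hcop.dvd_of_dvd_mul_left hdvd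
  exact hprime.not_unit (hsf (p : ℤ) (by rwa [← sq]))

/-- With `α = c²·l` and `β = c²·q₀²·η` (`l`, `η` squarefree and coprime to
`c`, and `q₀` a prime avoiding `δ`, `c`, `l`, `η`), if for every prime `p ∣ c` with `p ∤ δ` one
has `p ∤ a·a′` and `a ≡ a′ (mod p)`, and if `(a′_{(q₀)} | q₀) = 1`, then
`H_δ(a, α) = −H_δ(a′, β)`. -/
theorem statement_13 (δ : ℤ) (hδ0 : δ ≠ 0) (hδeven : Even δ)
    (a a' c l η : ℤ) (ha : a ≠ 0) (ha' : a' ≠ 0) (hc : c ≠ 0) (hl : l ≠ 0) (hη : η ≠ 0)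
    (hlsf : Squarefree l) (hηsf : Squarefree η)
    (hcl : IsCoprime c l) (hcη : IsCoprime c η)
    (q₀ : ℕ) (hq₀ : q₀.Prime) (hq₀δ : ¬ ((q₀ : ℤ) ∣ δ)) (hq₀c : ¬ ((q₀ : ℤ) ∣ c))
    (hq₀l : ¬ ((q₀ : ℤ) ∣ l)) (hq₀η : ¬ ((q₀ : ℤ) ∣ η))
    (hcong : ∀ p : ℕ, p.Prime → (p : ℤ) ∣ c → ¬ (p : ℤ) ∣ δ →
      ¬ (p : ℤ) ∣ a * a' ∧ a ≡ a' [ZMOD (p : ℤ)])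
    (hq₀sq : jacobiSym (ptp q₀ a') q₀ = 1) :
    Hfun δ a (c ^ 2 * l) = -Hfun δ a' (c ^ 2 * (q₀ : ℤ) ^ 2 * η) := by
  classical
  have hdvd : ∀ (p : ℕ) (n : ℤ), (p : ℤ) ∣ n ↔ p ∣ n.natAbs := fun p n =>
    Int.dvd_natAbs.symm.trans Int.natCast_dvd_natCast
  have hα0 : c ^ 2 * l ≠ 0 := mul_ne_zero (pow_ne_zero 2 hc) hl
  have hq₀0 : (q₀ : ℤ) ≠ 0 := Int.natCast_ne_zero.mpr hq₀.pos.ne'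
  have hβ0 : c ^ 2 * (q₀ : ℤ) ^ 2 * η ≠ 0 :=
    mul_ne_zero (mul_ne_zero (pow_ne_zero 2 hc) (pow_ne_zero 2 hq₀0)) hη
  have hβeq : c ^ 2 * (q₀ : ℤ) ^ 2 * η = (c * (q₀ : ℤ)) ^ 2 * η := by ring
  set T : Finset ℕ := c.natAbs.primeFactors.filter (fun p : ℕ => ¬ ((p : ℤ) ∣ δ)) with hTdef
  have hTmem : ∀ p : ℕ, p ∈ T ↔ p.Prime ∧ (p : ℤ) ∣ c ∧ ¬ ((p : ℤ) ∣ δ) := by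
    intro p
    simp only [hTdef, Finset.mem_filter, Nat.mem_primeFactors, ← hdvd, Int.natAbs_ne_zero]
    tauto
  -- the index set for α
  have hset1 : (c ^ 2 * l).natAbs.primeFactors.filter
      (fun p : ℕ => ¬ ((p : ℤ) ∣ δ) ∧ (p : ℤ) ^ 2 ∣ c ^ 2 * l) = T := by
    ext p
    simp only [Finset.mem_filter, Nat.mem_primeFactors, ← hdvd, Int.natAbs_ne_zero, hTmem]
    constructor
    · rintro ⟨⟨hp, -, -⟩, hpδ, hpsq⟩
      refine ⟨hp, ?_, hpδ⟩
      by_contra hpc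
      exact sq_dvd_aux hp hlsf hpsq hpc
    · rintro ⟨hp, hpc, hpδ⟩
      have : (p : ℤ) ^ 2 ∣ c ^ 2 * l := Dvd.dvd.mul_right (pow_dvd_pow_of_dvd hpc 2) l
      exact ⟨⟨hp, (dvd_pow_self ((p : ℤ)) two_ne_zero).trans this, hα0⟩, hpδ, this⟩
  have hq₀T : q₀ ∉ T := fun h => hq₀c ((hTmem q₀).mp h).2.1
  -- the index set for β
  have hset2 : (c ^ 2 * (q₀ : ℤ) ^ 2 * η).natAbs.primeFactors.filter
      (fun p : ℕ => ¬ ((p : ℤ) ∣ δ) ∧ (p : ℤ) ^ 2 ∣ c ^ 2 * (q₀ : ℤ) ^ 2 * η)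
      = insert q₀ T := by
    ext p
    simp only [Finset.mem_filter, Nat.mem_primeFactors, ← hdvd, Int.natAbs_ne_zero,
      Finset.mem_insert, hTmem]
    constructor
    · rintro ⟨⟨hp, -, -⟩, hpδ, hpsq⟩
      rw [hβeq] at hpsq
      by_cases hpq : p = q₀
      · exact Or.inl hpq
      refine Or.inr ⟨hp, ?_, hpδ⟩
      by_contra hpc
      have hpcq : ¬ (p : ℤ) ∣ c * (q₀ : ℤ) := by
        intro hd
        rcases (Nat.prime_iff_prime_int.mp hp).dvd_mul.mp hd with h | h
        · exact hpc h
        · exact hpq (Nat.prime_dvd_prime_iff_eq hp hq₀ |>.mp (Int.natCast_dvd_natCast.mp h))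
      exact sq_dvd_aux hp hηsf hpsq hpcq
    · rintro (rfl | ⟨hp, hpc, hpδ⟩)
      · have hsq : (p : ℤ) ^ 2 ∣ c ^ 2 * (p : ℤ) ^ 2 * η :=
          ⟨c ^ 2 * η, by ring⟩
        exact ⟨⟨hq₀, (dvd_pow_self ((p : ℤ)) two_ne_zero).trans hsq, hβ0⟩, hq₀δ, hsq⟩
      · have hsq : (p : ℤ) ^ 2 ∣ c ^ 2 * (q₀ : ℤ) ^ 2 * η :=
          Dvd.dvd.mul_right (Dvd.dvd.mul_right (pow_dvd_pow_of_dvd hpc 2) _) η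
        exact ⟨⟨hp, (dvd_pow_self ((p : ℤ)) two_ne_zero).trans hsq, hβ0⟩, hpδ, hsq⟩
  -- valuation at q₀ of β
  haveI := Fact.mk hq₀
  have hvq₀ : padicValInt q₀ (c ^ 2 * (q₀ : ℤ) ^ 2 * η) = 2 := by
    rw [hβeq, val_mul_sq q₀ hq₀ _ η (mul_ne_zero hc hq₀0) hη hq₀η,
      padicValInt.mul hc hq₀0, padicValInt.eq_zero_of_not_dvd hq₀c, padicValInt_self]
  -- the q₀ factor is -1
  have hq₀term : (-(jacobiSym (ptp q₀ a') q₀)) ^ (padicValInt q₀ (c ^ 2 * (q₀ : ℤ) ^ 2 * η) - 1)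
      = -1 := by
    rw [hvq₀, hq₀sq]
    norm_num
  -- equality of generic factors
  have hfac : ∀ p ∈ T,
      (-(jacobiSym (ptp p a) p)) ^ (padicValInt p (c ^ 2 * l) - 1)
      = (-(jacobiSym (ptp p a') p)) ^ (padicValInt p (c ^ 2 * (q₀ : ℤ) ^ 2 * η) - 1) := by
    intro p hpT
    obtain ⟨hp, hpc, hpδ⟩ := (hTmem p).mp hpT
    obtain ⟨hpaa', hpmod⟩ := hcong p hp hpc hpδ
    have hpa : ¬ (p : ℤ) ∣ a := fun h => hpaa' (h.mul_right a')
    have hpa' : ¬ (p : ℤ) ∣ a' := fun h => hpaa' (h.mul_left a)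
    have hpq : p ≠ q₀ := fun h => hq₀c (h ▸ hpc)
    have hpcq : ¬ (p : ℤ) ∣ (q₀ : ℤ) := fun h =>
      hpq (Nat.prime_dvd_prime_iff_eq hp hq₀ |>.mp (Int.natCast_dvd_natCast.mp h))
    have hv1 : padicValInt p (c ^ 2 * l) = 2 * padicValInt p c :=
      val_mul_sq p hp c l hc hl (not_dvd_of_coprime hp hcl hpc)
    have hv2 : padicValInt p (c ^ 2 * (q₀ : ℤ) ^ 2 * η) = 2 * padicValInt p c := by
      haveI := Fact.mk hp
      rw [hβeq, val_mul_sq p hp _ η (mul_ne_zero hc hq₀0) hη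
        (not_dvd_of_coprime hp hcη hpc), padicValInt.mul hc hq₀0,
        padicValInt.eq_zero_of_not_dvd hpcq]
      ring
    have hpt : ptp p a = a := by
      rw [ptp, padicValInt.eq_zero_of_not_dvd hpa, pow_zero, Int.ediv_one]
    have hpt' : ptp p a' = a' := by
      rw [ptp, padicValInt.eq_zero_of_not_dvd hpa', pow_zero, Int.ediv_one]
    have hjac : jacobiSym (ptp p a) p = jacobiSym (ptp p a') p := by
      rw [hpt, hpt', jacobiSym.mod_left a, jacobiSym.mod_left a', hpmod]
    rw [hjac, hv1, hv2]
  -- conclusion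
  rw [Hfun, Hfun, hset1, hset2, Finset.prod_insert hq₀T, hq₀term,
    Finset.prod_congr rfl hfac]
  ring
end
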